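/- Suppose 𝕋ⁿ = ℝ^{m×n}, f is implementable and satisfies non-imposition. For all a, b ∈ A with a ≠ b: if (β − ε) ∈ P^f(a,b) for some β ∈ ℝⁿ and some ε ∈ ℝⁿ with ε ≫ 0, then −β ∉ P^f(b,a). -/

import Mathlib

open Function

/-- A type profile: column `t a` is the utility vector in `ℝⁿ` for alternative `a`;
agent `i`'s type (row) is `fun a => t a i`.  The domain is unrestricted: `𝕋ⁿ = ℝ^{m×n}`. -/
abbrev Profile (n : ℕ) (A : Type*) := A → Fin n → ℝ

/-- Payment rule `p` implements `f` in dominant strategies: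
no agent `i` can gain by a unilateral deviation (a change of his own row only). -/
def Implements {n : ℕ} {A : Type*} (f : Profile n A → A)
    (p : Profile n A → Fin n → ℝ) : Prop :=
  ∀ t s : Profile n A, ∀ i : Fin n,
    (∀ j : Fin n, j ≠ i → ∀ a : A, s a j = t a j) →
    t (f t) i + p t i ≥ t (f s) i + p s i

/-- `f` is implementable in dominant strategies. -/
def Implementable {n : ℕ} {A : Type*} (f : Profile n A → A) : Prop :=
  ∃ p, Implements f p

/-- The choice set `C^f(t)`: alternatives `a` such that raising the column of `a`
by any strictly positive `ε` makes `f` choose `a`. -/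
def ChoiceSet {n : ℕ} {A : Type*} [DecidableEq A]
    (f : Profile n A → A) (t : Profile n A) : Set A :=
  {a | ∀ ε : Fin n → ℝ, (∀ i, 0 < ε i) →
    f (Function.update t a (t a + ε)) = a}

/-- `f` is neutral: permuting the columns of a profile permutes the choice set
accordingly (the profile `s` induced by `ρ` has `s^{ρ a} = t^a`, i.e. `s b = t (ρ⁻¹ b)`). -/
def Neutral {n : ℕ} {A : Type*} [DecidableEq A] (f : Profile n A → A) : Prop :=
  ∀ t : Profile n A, ∀ ρ : Equiv.Perm A,
    ChoiceSet f (fun b => t (ρ.symm b)) = ρ '' ChoiceSet f t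

/-- `f` satisfies non-imposition: every alternative is chosen at some profile. -/
def NonImposition {n : ℕ} {A : Type*} (f : Profile n A → A) : Prop :=
  ∀ a : A, ∃ t : Profile n A, f t = a

/-- The `P`-set of the pair `(a,b)`. -/
def RPSet {n : ℕ} {A : Type*} [DecidableEq A] (f : Profile n A → A) (a b : A) :
    Set (Fin n → ℝ) :=
  {α | ∃ t : Profile n A, a ∈ ChoiceSet f t ∧ t a - t b = α}

/-- The profile `1^a_ε`: column `a` equals the constant vector `ε·𝟙`, all other columns are `0`. -/
def OneProf {n : ℕ} {A : Type*} [DecidableEq A] (a : A) (ε : ℝ) : Profile n A :=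
  fun b => if b = a then (fun _ => ε) else 0

/-!
Implementability forces weak monotonicity agent by agent, so if `f` chooses `a` at `t` and every
agent's advantage of `a` over every other alternative strictly grows, `f` still chooses `a`.
Given witnesses `t` for `β - ε ∈ P^f(a,b)` and `s` for `-β ∈ P^f(b,a)`, put `u^a - u^b = β - ε/2`
and push every other column low enough. Then `a` gains `ε/2` over `t` and `b` gains `ε/2` over
`s` against every alternative, so `f u = a` and `f u = b`.
-/

namespace Implements

variable {n : ℕ} {A : Type*} {f : Profile n A → A} {p : Profile n A → Fin n → ℝ}

theorem weak_monotonicity (hp : Implements f p) {u v : Profile n A} {i : Fin n}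
    (hagree : ∀ j, j ≠ i → ∀ x, v x j = u x j) :
    v (f u) i - v (f v) i ≤ u (f u) i - u (f v) i := by
  have huv := hp u v i hagree
  have hvu := hp v u i fun j hj x => (hagree j hj x).symm
  linarith

theorem apply_eq_of_forall_sub_lt (hp : Implements f p) {a : A} {t s : Profile n A}
    (hft : f t = a) (hgain : ∀ x, x ≠ a → ∀ i, t a i - t x i < s a i - s x i) : f s = a := by
  let mix (S : Finset (Fin n)) : Profile n A := fun x i => if i ∈ S then s x i else t x i
  suffices hmix : ∀ S, f (mix S) = a by simpa [mix] using hmix Finset.univ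
  intro S
  induction S using Finset.induction_on with
  | empty => simpa [mix] using hft
  | insert i S hiS ih =>
    by_contra hne
    have hagree : ∀ j, j ≠ i → ∀ x, mix (insert i S) x j = mix S x j := by
      intro j hj x
      simp [mix, hj]
    have hmono := weak_monotonicity hp hagree
    rw [ih] at hmono
    simp only [mix, Finset.mem_insert_self, if_true, hiS, if_false] at hmono
    linarith [hgain _ hne i]

theorem apply_eq_of_mem_choiceSet [DecidableEq A] (hp : Implements f p) {a : A}
    {t s : Profile n A} (ha : a ∈ ChoiceSet f t) {δ : Fin n → ℝ} (hδ : ∀ i, 0 < δ i)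
    (hgain : ∀ x, x ≠ a → ∀ i, t a i - t x i + δ i ≤ s a i - s x i) : f s = a := by
  refine hp.apply_eq_of_forall_sub_lt (ha (fun i => δ i / 2) fun i => half_pos (hδ i))
    fun x hx i => ?_
  simp only [Function.update_self, Function.update_of_ne hx, Pi.add_apply]
  linarith [hgain x hx i, hδ i]

end Implements

theorem pset_no_reversal_general
    {n : ℕ} {A : Type*} [DecidableEq A]
    (f : Profile n A → A)
    (hf : Implementable f)
    (a b : A) (hab : a ≠ b)
    (β ε : Fin n → ℝ) (hε : ∀ i, 0 < ε i)
    (h : β - ε ∈ RPSet f a b) :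
    -β ∉ RPSet f b a := by
  obtain ⟨p, hp⟩ := hf
  obtain ⟨t, hat, hta⟩ := h
  rintro ⟨s, hbs, hsb⟩
  have ht i : t a i - t b i = β i - ε i := congrFun hta i
  have hs i : s b i - s a i = -β i := congrFun hsb i
  let u : Profile n A := fun x i =>
    if x = a then β i - ε i / 2
    else if x = b then 0
    else min (β i - ε i / 2 - (t a i - t x i)) (s x i - s b i) - ε i / 2
  have hδ i : 0 < ε i / 2 := half_pos (hε i)
  have hua : f u = a := hp.apply_eq_of_mem_choiceSet hat hδ fun x hxa i => by
    by_cases hxb : x = b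
    · simp only [u, if_true, hxb, hab.symm, if_false]
      linarith [ht i]
    · simp only [u, if_true, hxa, hxb, if_false]
      linarith [min_le_left (β i - ε i / 2 - (t a i - t x i)) (s x i - s b i)]
  have hub : f u = b := hp.apply_eq_of_mem_choiceSet hbs hδ fun x hxb i => by
    by_cases hxa : x = a
    · simp only [u, if_true, hxa, hab.symm, if_false]
      linarith [hs i]
    · simp only [u, if_true, hxa, hxb, hab.symm, if_false]
      linarith [min_le_right (β i - ε i / 2 - (t a i - t x i)) (s x i - s b i)]
  exact hab (hua.symm.trans hub)

/-- if `β - ε ∈ P^f(a,b)` for some `ε ≫ 0`, then `-β ∉ P^f(b,a)`. -/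
theorem pset_no_reversal
    {n : ℕ} {A : Type*} [Fintype A] [DecidableEq A]
    (hn : 0 < n) (hA : 3 ≤ Fintype.card A)
    (f : Profile n A → A)
    (hf : Implementable f) (hni : NonImposition f)
    (a b : A) (hab : a ≠ b)
    (β ε : Fin n → ℝ) (hε : ∀ i, 0 < ε i)
    (h : β - ε ∈ RPSet f a b) :
    -β ∉ RPSet f b a :=
  pset_no_reversal_general f hf a b hab β ε hε h
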